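/- Let T be an automorphism of a measurable space (X, 𝓕) and μ₀ a T-invariant probability measure. Let ξ be a countable measurable partition of (X, 𝓕) whose atoms are enumerated as A₁, A₂, …, and for m ∈ ℕ let ξ_m denote the finite partition obtained from ξ by replacing all atoms with index ≥ m by their union. Suppose there exist a sequence (μₙ)_{n≥1} of T-invariant probability measures, natural numbers rₙ → ∞, and positive reals εₙ → 0 such that: (i) ξ is a generator for (T, μₙ) for every n ≥ 0; (ii) |μ₀(A) − μₙ(A)| ≤ εₙ μₙ(A) for every atom A of ⋁_{i=0}^{rₙ} T^{-i} ξ and every n ≥ 0; (iii) limsup_{m→∞} limsup_{n→∞} h_{μₙ}(T, ξ_m) ≥ h for some h ≥ 0. Then h_{μ₀}(T) ≥ h. -/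

import Mathlib

open MeasureTheory Filter Set
open scoped ENNReal

/-- A countable measurable partition of `X`, encoded as an `ℕ`-indexed family of
pairwise disjoint measurable sets covering `X` (atoms are allowed to be empty,
which accommodates finite partitions as well). -/
def IsCountablePartition {X : Type*} [MeasurableSpace X] (η : ℕ → Set X) : Prop :=
  (∀ i, MeasurableSet (η i)) ∧ Pairwise (Function.onFun Disjoint η) ∧ (⋃ i, η i) = Set.univ

/-- The entropy `H_μ(η) = -∑_A μ(A) log μ(A)` of a countable family of sets,
computed in `ℝ≥0∞` since it may be infinite (`0 log 0 = 0` by convention). -/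
noncomputable def partEntropy {X ι : Type*} [MeasurableSpace X]
    (μ : Measure X) (η : ι → Set X) : ℝ≥0∞ :=
  ∑' i, ENNReal.ofReal (Real.negMulLog (μ (η i)).toReal)

/-- The atom of the refinement `⋁_{i=k}^{k+r-1} T⁻ⁱ ξ` labelled by the word
`f : Fin r → ℕ`, namely `⋂_j T^{-(k+j)} ξ_{f j}`. -/
def joinAtom {X : Type*} (T : X → X) (ξ : ℕ → Set X) (k r : ℕ) (f : Fin r → ℕ) : Set X :=
  ⋂ j : Fin r, (T^[k + (j : ℕ)]) ⁻¹' (ξ (f j))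

/-- The entropy of `T` relative to the partition `ξ`:
`h_μ(T, ξ) = lim_n (1/n) H_μ(⋁_{i=1}^n T⁻ⁱ ξ)` (formalized via `liminf`). -/
noncomputable def entropyOf {X : Type*} [MeasurableSpace X]
    (T : X → X) (μ : Measure X) (ξ : ℕ → Set X) : ℝ≥0∞ :=
  Filter.atTop.liminf (fun n : ℕ => partEntropy μ (joinAtom T ξ 1 n) / (n : ℝ≥0∞))

/-- Kolmogorov–Sinai entropy: the supremum of `h_μ(T, η)` over all countable
measurable partitions `η` of finite entropy. -/
noncomputable def ksEntropy {X : Type*} [MeasurableSpace X]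
    (T : X → X) (μ : Measure X) : ℝ≥0∞ :=
  ⨆ (η : ℕ → Set X) (_ : IsCountablePartition η) (_ : partEntropy μ η ≠ ⊤),
    entropyOf T μ η

/-- `ξ` is a generator for `(T, μ)`: the σ-algebra generated by
`{T^{-i} ξ_j : i ∈ ℤ, j ∈ ℕ}` equals the full σ-algebra modulo `μ`-null sets. -/
def IsGenerator {X : Type*} [MeasurableSpace X]
    (T : X ≃ᵐ X) (μ : Measure X) (ξ : ℕ → Set X) : Prop :=
  ∀ A : Set X, MeasurableSet A → ∃ B : Set X,
    MeasurableSet[MeasurableSpace.generateFrom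
      {S : Set X | ∃ (i : ℤ) (j : ℕ), S = ⇑(T.toEquiv ^ i) ⁻¹' (ξ j)}] B ∧
    μ (symmDiff A B) = 0

/-- The finite partition `ξ_m` obtained from the enumerated partition
`ξ 0, ξ 1, ξ 2, …` by replacing all atoms with index `≥ m` by their union:
its atoms are `ξ 0, …, ξ (m-1)` together with `⋃_{j ≥ m} ξ j` (placed at
index `m`; all further indices carry the empty set). -/
noncomputable def truncPart {X : Type*} (ξ : ℕ → Set X) (m : ℕ) : ℕ → Set X :=
  fun i => if i < m then ξ i else if i = m then ⋃ j, ⋃ (_ : m ≤ j), ξ j else ∅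

/-! For fixed `m` the partition `ξ_m` is finite, so by Fekete's lemma `h_ν(T, ξ_m)` is the limit,
and also the infimum, of `H_ν(⋁_{i<K} T⁻ⁱ ξ_m) / K`. Every atom of `⋁_{i≤rₙ} T⁻ⁱ ξ_m` is a disjoint
union of atoms of `⋁_{i≤rₙ} T⁻ⁱ ξ`, so the closeness hypothesis passes to it, and comparing
`-q log q` with `-p log p` atom by atom gives
`H_{μₙ}(⋁_{i≤rₙ} T⁻ⁱ ξ_m) ≤ log (1 + εₙ) + H_{μ₀}(⋁_{i≤rₙ} T⁻ⁱ ξ_m) / (1 - εₙ)`.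
Dividing by `rₙ + 1` and letting `n → ∞` yields
`limsup_n h_{μₙ}(T, ξ_m) ≤ h_{μ₀}(T, ξ_m) ≤ h_{μ₀}(T)` for every `m`. -/

open Real Topology

-- Summed over a joint distribution `p` with marginals `a`, `b`, the last term vanishes and this
-- becomes Gibbs' inequality `sum_negMulLog_le_add`.
lemma negMulLog_le_of_le_of_le {p a b : ℝ} (hp : 0 ≤ p) (ha : p ≤ a) (hb : p ≤ b) :
    negMulLog p ≤ -p * log a - p * log b + (a * b - p) := by
  rcases hp.eq_or_lt with rfl | hp
  · simpa using mul_nonneg ha hb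
  have hab : 0 < a * b := mul_pos (hp.trans_le ha) (hp.trans_le hb)
  have key := log_le_sub_one_of_pos (div_pos hab hp)
  rw [log_div hab.ne' hp.ne', log_mul (hp.trans_le ha).ne' (hp.trans_le hb).ne'] at key
  have hmul : p * (a * b / p - 1) = a * b - p := by field_simp
  have := mul_le_mul_of_nonneg_left key hp.le
  rw [negMulLog]
  linarith

lemma sum_negMulLog_le_add {ι κ : Type*} [Fintype ι] [Fintype κ] (p : ι → κ → ℝ)
    (hp : ∀ i j, 0 ≤ p i j) (hsum : ∑ i, ∑ j, p i j = 1) :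
    ∑ i, ∑ j, negMulLog (p i j) ≤
      ∑ i, negMulLog (∑ j, p i j) + ∑ j, negMulLog (∑ i, p i j) := by
  set a := fun i => ∑ j, p i j with ha
  set b := fun j => ∑ i, p i j with hb
  have hsum_b : ∑ j, b j = 1 := by rw [hb, Finset.sum_comm]; exact hsum
  have hlog_a : ∑ i, ∑ j, p i j * log (a i) = ∑ i, a i * log (a i) := by
    simp only [ha, Finset.sum_mul]
  have hlog_b : ∑ i, ∑ j, p i j * log (b j) = ∑ j, b j * log (b j) := by
    rw [Finset.sum_comm]; simp only [hb, Finset.sum_mul]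
  have hprod : ∑ i, ∑ j, a i * b j = 1 := by
    rw [← Finset.sum_mul_sum, hsum, hsum_b, one_mul]
  calc ∑ i, ∑ j, negMulLog (p i j)
      ≤ ∑ i, ∑ j, (-p i j * log (a i) - p i j * log (b j) + (a i * b j - p i j)) :=
        Finset.sum_le_sum fun i _ => Finset.sum_le_sum fun j _ =>
          negMulLog_le_of_le_of_le (hp i j)
            (Finset.single_le_sum (fun j _ => hp i j) (Finset.mem_univ j))
            (Finset.single_le_sum (fun i _ => hp i j) (Finset.mem_univ i))
    _ = ∑ i, negMulLog (a i) + ∑ j, negMulLog (b j) := by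
        simp only [Finset.sum_add_distrib, Finset.sum_sub_distrib, neg_mul,
          Finset.sum_neg_distrib, hlog_a, hlog_b, hprod, negMulLog]
        rw [show ∑ i, ∑ j, p i j = 1 from hsum]
        ring

lemma negMulLog_le_of_abs_sub_le {p q ε : ℝ} (hq : 0 ≤ q) (hp : p ≤ 1) (hε : ε < 1)
    (hpq : |p - q| ≤ ε * q) :
    negMulLog q ≤ q * log (1 + ε) + negMulLog p / (1 - ε) := by
  obtain ⟨hpq_lower, hpq_upper⟩ := abs_le.1 hpq
  rcases hq.eq_or_lt with rfl | hq
  · simp [show p = 0 by linarith]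
  have hp0 : 0 < p := by nlinarith
  have hlog_ratio : log p - log q ≤ log (1 + ε) := by
    rw [← log_div hp0.ne' hq.ne']
    exact log_le_log (div_pos hp0 hq) ((div_le_iff₀ hq).2 (by linarith))
  have hq_le : q ≤ p / (1 - ε) := (le_div_iff₀ (by linarith)).2 (by linarith)
  calc negMulLog q = q * (log p - log q) + q * -log p := by rw [negMulLog]; ring
    _ ≤ q * log (1 + ε) + p / (1 - ε) * -log p :=
        add_le_add (mul_le_mul_of_nonneg_left hlog_ratio hq.le)
          (mul_le_mul_of_nonneg_right hq_le (neg_nonneg.2 (log_nonpos hp0.le hp)))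
    _ = q * log (1 + ε) + negMulLog p / (1 - ε) := by rw [negMulLog]; ring

section

variable {X : Type*}

section joinAtom

variable {T : X → X} {ζ : ℕ → Set X}

lemma joinAtom_add_eq_preimage (k a K : ℕ) (f : Fin K → ℕ) :
    joinAtom T ζ (k + a) K f = T^[a] ⁻¹' joinAtom T ζ k K f := by
  ext x
  simp only [joinAtom, mem_iInter, mem_preimage, ← Function.iterate_add_apply]
  exact forall_congr' fun j => by rw [show k + j + a = k + a + j by omega]

lemma joinAtom_add_eq_inter (k a b : ℕ) (f : Fin (a + b) → ℕ) :
    joinAtom T ζ k (a + b) f =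
      joinAtom T ζ k a (f ∘ Fin.castAdd b) ∩ joinAtom T ζ (k + a) b (f ∘ Fin.natAdd a) := by
  ext x
  simp only [joinAtom, mem_iInter, mem_inter_iff, mem_preimage, Fin.forall_fin_add,
    Function.comp_apply, Fin.val_castAdd, Fin.val_natAdd, add_assoc]

lemma disjoint_joinAtom (hζ : Pairwise (Function.onFun Disjoint ζ)) (k K : ℕ)
    {f g : Fin K → ℕ} (hfg : f ≠ g) : Disjoint (joinAtom T ζ k K f) (joinAtom T ζ k K g) := by
  obtain ⟨j, hj⟩ := Function.ne_iff.1 hfg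
  exact ((hζ hj).preimage _).mono (iInter_subset _ j) (iInter_subset _ j)

lemma joinAtom_eq_iUnion_of_coarsen {ξ : ℕ → Set X} {φ : ℕ → ℕ}
    (hζ : ∀ c, ζ c = ⋃ (i) (_ : φ i = c), ξ i) (k K : ℕ) (g : Fin K → ℕ) :
    joinAtom T ζ k K g = ⋃ f : {f : Fin K → ℕ // φ ∘ f = g}, joinAtom T ξ k K f := by
  ext x
  simp only [joinAtom, hζ, mem_iInter, mem_iUnion, mem_preimage, exists_prop, Classical.skolem,
    funext_iff, Function.comp_apply, forall_and, Subtype.exists]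

end joinAtom

lemma truncPart_eq_iUnion (ξ : ℕ → Set X) (m c : ℕ) :
    truncPart ξ m c = ⋃ (i) (_ : min i m = c), ξ i := by
  ext x
  simp only [truncPart]
  split_ifs with hc hcm <;>
    simp only [mem_iUnion, exists_prop, mem_empty_iff_false, false_iff, not_exists, not_and]
  · exact ⟨fun hx => ⟨c, by omega, hx⟩, fun ⟨i, hi, hx⟩ => by rwa [show i = c by omega] at hx⟩
  · exact ⟨fun ⟨i, hi, hx⟩ => ⟨i, by omega, hx⟩, fun ⟨i, hi, hx⟩ => ⟨i, by omega, hx⟩⟩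
  · omega

variable [MeasurableSpace X]

lemma measurableSet_joinAtom {T : X → X} {ζ : ℕ → Set X} (hT : Measurable T)
    (hζ : ∀ i, MeasurableSet (ζ i)) (k K : ℕ) (f : Fin K → ℕ) :
    MeasurableSet (joinAtom T ζ k K f) :=
  .iInter fun _ => hT.iterate _ (hζ _)

def IsMeasurablePartition {ι : Type*} (P : ι → Set X) : Prop :=
  (∀ i, MeasurableSet (P i)) ∧ Pairwise (Function.onFun Disjoint P) ∧ (⋃ i, P i) = univ

namespace IsMeasurablePartition

variable {ι κ : Type*} {P : ι → Set X}

lemma measure_eq_sum_inter [Fintype ι] (hP : IsMeasurablePartition P) (ν : Measure X)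
    {A : Set X} (hA : MeasurableSet A) : ν A = ∑ i, ν (A ∩ P i) := by
  rw [← tsum_fintype (L := .unconditional _), ← measure_iUnion (fun i j hij =>
      (hP.2.1 hij).mono inter_subset_right inter_subset_right) (fun i => hA.inter (hP.1 i)),
    ← inter_iUnion, hP.2.2, inter_univ]

lemma sum_toReal_measure [Fintype ι] (hP : IsMeasurablePartition P) (ν : Measure X)
    [IsProbabilityMeasure ν] : ∑ i, (ν (P i)).toReal = 1 := by
  have h := hP.measure_eq_sum_inter ν MeasurableSet.univ
  simp only [univ_inter, measure_univ] at h
  rw [← ENNReal.toReal_sum fun i _ => measure_ne_top ν _, ← h, ENNReal.toReal_one]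

lemma preimage {Y : Type*} [MeasurableSpace Y] {P : ι → Set Y} (hP : IsMeasurablePartition P)
    {f : X → Y} (hf : Measurable f) : IsMeasurablePartition fun i => f ⁻¹' P i :=
  ⟨fun i => hf (hP.1 i), fun _ _ hij => (hP.2.1 hij).preimage f, by
    rw [← preimage_iUnion, hP.2.2, preimage_univ]⟩

lemma coarsen [Countable ι] (hP : IsMeasurablePartition P) (φ : ι → κ) :
    IsMeasurablePartition fun c => ⋃ (i) (_ : φ i = c), P i := by
  refine ⟨fun c => .iUnion fun i => .iUnion fun _ => hP.1 i, fun c c' hcc' => ?_, ?_⟩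
  · refine disjoint_iUnion₂_left.2 fun i hi => disjoint_iUnion₂_right.2 fun j hj => hP.2.1 ?_
    rintro rfl
    exact hcc' (hi.symm.trans hj)
  · rw [iUnion_comm, ← hP.2.2]
    exact iUnion_congr fun i => by simp

end IsMeasurablePartition

noncomputable def finEntropy {ι : Type*} [Fintype ι] (ν : Measure X) (P : ι → Set X) : ℝ :=
  ∑ i, negMulLog (ν (P i)).toReal

section finEntropy

variable {ι κ : Type*} [Fintype ι] [Fintype κ]

lemma finEntropy_inter_le {P : ι → Set X} {Q : κ → Set X} (hP : IsMeasurablePartition P)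
    (hQ : IsMeasurablePartition Q) (ν : Measure X) [IsProbabilityMeasure ν] :
    finEntropy ν (fun z : ι × κ => P z.1 ∩ Q z.2) ≤ finEntropy ν P + finEntropy ν Q := by
  have hP_marg : ∀ i, ∑ j, (ν (P i ∩ Q j)).toReal = (ν (P i)).toReal := fun i => by
    rw [← ENNReal.toReal_sum fun j _ => measure_ne_top ν _,
      ← hQ.measure_eq_sum_inter ν (hP.1 i)]
  have hQ_marg : ∀ j, ∑ i, (ν (P i ∩ Q j)).toReal = (ν (Q j)).toReal := fun j => by
    simp_rw [inter_comm (P _)]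
    rw [← ENNReal.toReal_sum fun i _ => measure_ne_top ν _,
      ← hP.measure_eq_sum_inter ν (hQ.1 j)]
  have htotal : ∑ i, ∑ j, (ν (P i ∩ Q j)).toReal = 1 := by
    simp only [hP_marg, hP.sum_toReal_measure]
  simpa only [finEntropy, Fintype.sum_prod_type, hP_marg, hQ_marg] using
    sum_negMulLog_le_add _ (fun _ _ => ENNReal.toReal_nonneg) htotal

lemma finEntropy_preimage {Y : Type*} [MeasurableSpace Y] {P : ι → Set Y}
    (hP : ∀ i, MeasurableSet (P i)) {f : X → Y} {μ : Measure X} {ν : Measure Y}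
    (hf : MeasurePreserving f μ ν) :
    finEntropy μ (fun i => f ⁻¹' P i) = finEntropy ν P := by
  simp only [finEntropy, hf.measure_preimage (hP _).nullMeasurableSet]

lemma finEntropy_nonneg (ν : Measure X) [IsProbabilityMeasure ν] (P : ι → Set X) :
    0 ≤ finEntropy ν P :=
  Finset.sum_nonneg fun _ _ => negMulLog_nonneg ENNReal.toReal_nonneg measureReal_le_one

lemma finEntropy_le_of_abs_sub_le {P : ι → Set X} (hP : IsMeasurablePartition P)
    {μ ν : Measure X} [IsProbabilityMeasure μ] [IsProbabilityMeasure ν] {ε : ℝ} (hε : ε < 1)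
    (hclose : ∀ i, |(μ (P i)).toReal - (ν (P i)).toReal| ≤ ε * (ν (P i)).toReal) :
    finEntropy ν P ≤ log (1 + ε) + finEntropy μ P / (1 - ε) :=
  calc finEntropy ν P
      ≤ ∑ i, ((ν (P i)).toReal * log (1 + ε) + negMulLog (μ (P i)).toReal / (1 - ε)) :=
        Finset.sum_le_sum fun i _ => negMulLog_le_of_abs_sub_le ENNReal.toReal_nonneg
          measureReal_le_one hε (hclose i)
    _ = log (1 + ε) + finEntropy μ P / (1 - ε) := by
        rw [Finset.sum_add_distrib, ← Finset.sum_mul, ← Finset.sum_div, hP.sum_toReal_measure,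
          one_mul, finEntropy]

end finEntropy

lemma abs_toReal_measure_iUnion_sub_le {ι : Type*} [Countable ι] {μ ν : Measure X}
    [IsFiniteMeasure μ] [IsFiniteMeasure ν] {A : ι → Set X} (hA : ∀ i, MeasurableSet (A i))
    (hAd : Pairwise (Function.onFun Disjoint A)) {ε : ℝ}
    (h : ∀ i, |(μ (A i)).toReal - (ν (A i)).toReal| ≤ ε * (ν (A i)).toReal) :
    |(μ (⋃ i, A i)).toReal - (ν (⋃ i, A i)).toReal| ≤ ε * (ν (⋃ i, A i)).toReal := by
  have hasSum (ρ : Measure X) [IsFiniteMeasure ρ] :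
      HasSum (fun i => (ρ (A i)).toReal) (ρ (⋃ i, A i)).toReal := by
    have hfin := measure_ne_top ρ (⋃ i, A i)
    rw [measure_iUnion hAd hA] at hfin ⊢
    rw [ENNReal.tsum_toReal_eq fun i => measure_ne_top ρ _]
    exact (ENNReal.summable_toReal hfin).hasSum
  refine abs_le.2 ⟨?_, ?_⟩
  · exact hasSum_le (fun i => (abs_le.1 (h i)).1) ((hasSum ν).mul_left ε).neg
      ((hasSum μ).sub (hasSum ν))
  · exact hasSum_le (fun i => (abs_le.1 (h i)).2) ((hasSum μ).sub (hasSum ν))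
      ((hasSum ν).mul_left ε)

lemma abs_toReal_measure_joinAtom_sub_le_of_coarsen {T : X → X} (hT : Measurable T)
    {ξ ζ : ℕ → Set X} (hξm : ∀ i, MeasurableSet (ξ i))
    (hξd : Pairwise (Function.onFun Disjoint ξ)) {φ : ℕ → ℕ}
    (hζ : ∀ c, ζ c = ⋃ (i) (_ : φ i = c), ξ i) {μ ν : Measure X} [IsFiniteMeasure μ]
    [IsFiniteMeasure ν] {ε : ℝ} {k K : ℕ}
    (hclose : ∀ f : Fin K → ℕ, |(μ (joinAtom T ξ k K f)).toReal - (ν (joinAtom T ξ k K f)).toReal|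
      ≤ ε * (ν (joinAtom T ξ k K f)).toReal) (g : Fin K → ℕ) :
    |(μ (joinAtom T ζ k K g)).toReal - (ν (joinAtom T ζ k K g)).toReal|
      ≤ ε * (ν (joinAtom T ζ k K g)).toReal := by
  rw [joinAtom_eq_iUnion_of_coarsen hζ]
  exact abs_toReal_measure_iUnion_sub_le
    (A := fun f : {f : Fin K → ℕ // φ ∘ f = g} => joinAtom T ξ k K f)
    (fun f => measurableSet_joinAtom hT hξm k K f.1)
    (fun f f' hff' => disjoint_joinAtom hξd k K (Subtype.coe_injective.ne hff'))
    fun f => hclose f.1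

def IsFinitePartition (ζ : ℕ → Set X) (m : ℕ) : Prop :=
  IsCountablePartition ζ ∧ ∀ i, m < i → ζ i = ∅

lemma isFinitePartition_truncPart {ξ : ℕ → Set X} (hξ : IsCountablePartition ξ) (m : ℕ) :
    IsFinitePartition (truncPart ξ m) m := by
  refine ⟨?_, fun i hi => by simp [truncPart, hi.ne', not_lt.2 hi.le]⟩
  rw [show truncPart ξ m = _ from funext (truncPart_eq_iUnion ξ m)]
  exact IsMeasurablePartition.coarsen hξ (min · m)

noncomputable def joinEntropy (T : X → X) (ζ : ℕ → Set X) (m : ℕ) (ν : Measure X) (K : ℕ) : ℝ :=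
  finEntropy ν fun w : Fin K → Fin (m + 1) => joinAtom T ζ 0 K (Fin.val ∘ w)

lemma bddBelow_joinEntropy_div (T : X → X) (ζ : ℕ → Set X) (m : ℕ) (ν : Measure X)
    [IsProbabilityMeasure ν] : BddBelow (range fun K : ℕ => joinEntropy T ζ m ν K / K) :=
  ⟨0, forall_mem_range.2 fun K => div_nonneg (finEntropy_nonneg ν _) K.cast_nonneg⟩

namespace IsFinitePartition

variable {T : X → X} {ζ : ℕ → Set X} {m : ℕ} {ν : Measure X}

lemma isMeasurablePartition_joinAtom (hζ : IsFinitePartition ζ m) (hT : Measurable T)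
    (k K : ℕ) :
    IsMeasurablePartition fun w : Fin K → Fin (m + 1) => joinAtom T ζ k K (Fin.val ∘ w) := by
  refine ⟨fun w => measurableSet_joinAtom hT hζ.1.1 k K _,
    fun w w' hww' => disjoint_joinAtom hζ.1.2.1 k K (Fin.val_injective.comp_left.ne hww'), ?_⟩
  refine eq_univ_of_forall fun x => ?_
  have hletter : ∀ j : Fin K, ∃ i : Fin (m + 1), T^[k + j] x ∈ ζ i := by
    intro j
    obtain ⟨i, hi⟩ := mem_iUnion.1 (hζ.1.2.2 ▸ mem_univ (T^[k + j] x))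
    have him : i ≤ m := by
      by_contra! h
      rw [hζ.2 i h] at hi
      exact hi
    exact ⟨⟨i, Nat.lt_succ_of_le him⟩, hi⟩
  choose w hw using hletter
  exact mem_iUnion.2 ⟨w, mem_iInter.2 hw⟩

lemma partEntropy_joinAtom (hζ : IsFinitePartition ζ m) (hν : MeasurePreserving T ν ν)
    [IsProbabilityMeasure ν] (K : ℕ) :
    partEntropy ν (joinAtom T ζ 1 K) = ENNReal.ofReal (joinEntropy T ζ m ν K) := by
  have hshift (f : Fin K → ℕ) : ν (joinAtom T ζ 1 K f) = ν (joinAtom T ζ 0 K f) := by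
    have h := joinAtom_add_eq_preimage (T := T) (ζ := ζ) 0 1 K f
    rw [zero_add, Function.iterate_one] at h
    exact h ▸ hν.measure_preimage
      (measurableSet_joinAtom hν.measurable hζ.1.1 0 K f).nullMeasurableSet
  have hzero : ∀ f ∉ Finset.univ.image (Fin.val ∘ · : (Fin K → Fin (m + 1)) → Fin K → ℕ),
      ENNReal.ofReal (negMulLog (ν (joinAtom T ζ 1 K f)).toReal) = 0 := by
    intro f hf
    obtain ⟨j, hj⟩ : ∃ j, m < f j := by
      by_contra! h
      exact hf (Finset.mem_image.2
        ⟨fun j => ⟨f j, Nat.lt_succ_of_le (h j)⟩, Finset.mem_univ _, rfl⟩)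
    have hempty : joinAtom T ζ 1 K f = ∅ :=
      eq_empty_of_subset_empty ((iInter_subset _ j).trans (by simp [hζ.2 _ hj]))
    simp [hempty]
  rw [partEntropy, tsum_eq_sum hzero, Finset.sum_image Fin.val_injective.comp_left.injOn,
    joinEntropy, finEntropy, ENNReal.ofReal_sum_of_nonneg
      fun _ _ => negMulLog_nonneg ENNReal.toReal_nonneg measureReal_le_one]
  simp only [hshift]

lemma subadditive_joinEntropy (hζ : IsFinitePartition ζ m) (hν : MeasurePreserving T ν ν)
    [IsProbabilityMeasure ν] : Subadditive (joinEntropy T ζ m ν) := by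
  intro a b
  have hT := hν.measurable
  have hsplit : joinEntropy T ζ m ν (a + b) =
      finEntropy ν fun z : (Fin a → Fin (m + 1)) × (Fin b → Fin (m + 1)) =>
        joinAtom T ζ 0 a (Fin.val ∘ z.1) ∩ T^[a] ⁻¹' joinAtom T ζ 0 b (Fin.val ∘ z.2) := by
    refine Fintype.sum_equiv (Fin.appendEquiv a b).symm _ _ fun w => ?_
    dsimp only
    rw [← joinAtom_add_eq_preimage, joinAtom_add_eq_inter]
    rfl
  rw [hsplit]
  refine (finEntropy_inter_le (hζ.isMeasurablePartition_joinAtom hT 0 a)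
    ((hζ.isMeasurablePartition_joinAtom hT 0 b).preimage (hT.iterate a)) ν).trans_eq ?_
  rw [finEntropy_preimage (hζ.isMeasurablePartition_joinAtom hT 0 b).1 (hν.iterate a)]
  rfl

lemma entropyOf_eq_lim (hζ : IsFinitePartition ζ m) (hν : MeasurePreserving T ν ν)
    [IsProbabilityMeasure ν] :
    entropyOf T ν ζ = ENNReal.ofReal (hζ.subadditive_joinEntropy hν).lim := by
  refine Tendsto.liminf_eq (((ENNReal.continuous_ofReal.tendsto _).comp
    ((hζ.subadditive_joinEntropy hν).tendsto_lim (bddBelow_joinEntropy_div T ζ m ν))).congr' ?_)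
  filter_upwards [eventually_ne_atTop 0] with K hK
  rw [Function.comp_apply, hζ.partEntropy_joinAtom hν,
    ENNReal.ofReal_div_of_pos (Nat.cast_pos.2 (Nat.pos_of_ne_zero hK)), ENNReal.ofReal_natCast]

lemma entropyOf_le_ksEntropy (hζ : IsFinitePartition ζ m) :
    entropyOf T ν ζ ≤ ksEntropy T ν := by
  have hfin : partEntropy ν ζ ≠ ⊤ := by
    rw [partEntropy, tsum_eq_sum (s := Finset.range (m + 1)) fun i hi => by
      simp [hζ.2 i (by simpa using hi)]]
    exact ENNReal.sum_ne_top.2 fun _ _ => ENNReal.ofReal_ne_top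
  exact le_iSup_of_le ζ (le_iSup₂_of_le hζ.1 hfin le_rfl)

lemma entropyOf_le_of_abs_sub_le (hζ : IsFinitePartition ζ m) {μ : Measure X}
    [IsProbabilityMeasure μ] [IsProbabilityMeasure ν] (hν : MeasurePreserving T ν ν) {ε : ℝ}
    (hε : ε < 1) {K : ℕ} (hK : K ≠ 0)
    (hclose : ∀ f : Fin K → ℕ, |(μ (joinAtom T ζ 0 K f)).toReal - (ν (joinAtom T ζ 0 K f)).toReal|
      ≤ ε * (ν (joinAtom T ζ 0 K f)).toReal) :
    entropyOf T ν ζ ≤ ENNReal.ofReal ((log (1 + ε) + joinEntropy T ζ m μ K / (1 - ε)) / K) := by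
  rw [hζ.entropyOf_eq_lim hν]
  refine ENNReal.ofReal_le_ofReal (((hζ.subadditive_joinEntropy hν).lim_le_div
    (bddBelow_joinEntropy_div T ζ m ν) hK).trans (div_le_div_of_nonneg_right ?_ K.cast_nonneg))
  exact finEntropy_le_of_abs_sub_le (hζ.isMeasurablePartition_joinAtom hν.measurable 0 K) hε
    fun _ => hclose _

lemma limsup_entropyOf_le (hζ : IsFinitePartition ζ m) {μ : Measure X} {ν : ℕ → Measure X}
    [IsProbabilityMeasure μ] [∀ n, IsProbabilityMeasure (ν n)] (hμ : MeasurePreserving T μ μ)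
    (hν : ∀ n, MeasurePreserving T (ν n) (ν n)) {K : ℕ → ℕ} (hK : Tendsto K atTop atTop)
    {ε : ℕ → ℝ} (hε : Tendsto ε atTop (𝓝 0))
    (hclose : ∀ n, ∀ f : Fin (K n) → ℕ,
      |(μ (joinAtom T ζ 0 (K n) f)).toReal - (ν n (joinAtom T ζ 0 (K n) f)).toReal|
        ≤ ε n * (ν n (joinAtom T ζ 0 (K n) f)).toReal) :
    limsup (fun n => entropyOf T (ν n) ζ) atTop ≤ entropyOf T μ ζ := by
  set H := joinEntropy T ζ m μ
  have hbound : ∀ᶠ n in atTop, entropyOf T (ν n) ζ ≤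
      ENNReal.ofReal ((log (1 + ε n) + H (K n) / (1 - ε n)) / K n) := by
    filter_upwards [hε.eventually_lt_const one_pos, hK.eventually_ne_atTop 0] with n hεn hKn
    exact hζ.entropyOf_le_of_abs_sub_le (hν n) hεn hKn (hclose n)
  have hlimit : Tendsto (fun n => (log (1 + ε n) + H (K n) / (1 - ε n)) / K n) atTop
      (𝓝 (hζ.subadditive_joinEntropy hμ).lim) := by
    have hlog : Tendsto (fun n => log (1 + ε n)) atTop (𝓝 0) := by
      have h1 : Tendsto (fun n => 1 + ε n) atTop (𝓝 1) := by
        simpa using tendsto_const_nhds.add hε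
      simpa [Function.comp_def] using (continuousAt_log one_ne_zero).tendsto.comp h1
    have hH := ((hζ.subadditive_joinEntropy hμ).tendsto_lim
      (bddBelow_joinEntropy_div T ζ m μ)).comp hK
    have hsum := (hlog.div_atTop (tendsto_natCast_atTop_atTop.comp hK)).add
      (hH.div (tendsto_const_nhds.sub hε) (by norm_num : (1 : ℝ) - 0 ≠ 0))
    rw [zero_add, sub_zero, div_one] at hsum
    exact hsum.congr fun n => by simp only [Function.comp_apply, Pi.div_apply, H]; ring
  calc limsup (fun n => entropyOf T (ν n) ζ) atTop
      ≤ limsup (fun n => ENNReal.ofReal ((log (1 + ε n) + H (K n) / (1 - ε n)) / K n)) atTop :=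
        limsup_le_limsup hbound
    _ = entropyOf T μ ζ := ((ENNReal.continuous_ofReal.tendsto _).comp hlimit).limsup_eq.trans
          (hζ.entropyOf_eq_lim hμ).symm

end IsFinitePartition

end

theorem ksEntropy_ge_of_approx_trunc_general {X : Type*} [MeasurableSpace X] (T : X ≃ᵐ X)
    (μ : ℕ → Measure X) (hprob : ∀ n, IsProbabilityMeasure (μ n))
    (hinv : ∀ n, MeasurePreserving T (μ n) (μ n))
    (ξ : ℕ → Set X) (hpart : IsCountablePartition ξ)
    (r : ℕ → ℕ) (ε : ℕ → ℝ)
    (hr : Tendsto r atTop atTop) (hε : Tendsto ε atTop (nhds 0))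
    (hclose : ∀ n, ∀ f : Fin (r n + 1) → ℕ,
      |((μ 0) (joinAtom T ξ 0 (r n + 1) f)).toReal
          - ((μ n) (joinAtom T ξ 0 (r n + 1) f)).toReal|
        ≤ ε n * ((μ n) (joinAtom T ξ 0 (r n + 1) f)).toReal)
    (h : ℝ≥0∞)
    (hlim : h ≤ Filter.atTop.limsup (fun m =>
      Filter.atTop.limsup (fun n => entropyOf T (μ n) (truncPart ξ m)))) :
    h ≤ ksEntropy T (μ 0) := by
  have := hprob
  have hK : Tendsto (fun n => r n + 1) atTop atTop := (tendsto_add_atTop_nat 1).comp hr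
  have hbound (m : ℕ) :
      limsup (fun n => entropyOf T (μ n) (truncPart ξ m)) atTop ≤ ksEntropy T (μ 0) := by
    have hζ := isFinitePartition_truncPart hpart m
    refine (hζ.limsup_entropyOf_le (hinv 0) hinv hK hε fun n => ?_).trans
      hζ.entropyOf_le_ksEntropy
    exact abs_toReal_measure_joinAtom_sub_le_of_coarsen T.measurable hpart.1 hpart.2.1
      (truncPart_eq_iUnion ξ m) (hclose n)
  calc h ≤ _ := hlim
    _ ≤ limsup (fun _ : ℕ => ksEntropy T (μ 0)) atTop := limsup_le_limsup (.of_forall hbound)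
    _ = ksEntropy T (μ 0) := limsup_const _

/-- **Remark.** In the main theorem, the conditions
`limsup_n h_{μ n}(T) ≥ h` and `H_{μ 0}(ξ) < ∞` can be replaced by the single
weaker condition `limsup_m limsup_n h_{μ n}(T, ξ_m) ≥ h`, where `ξ_m` is the
finite partition obtained from `ξ` by merging all atoms of index `≥ m`. -/
theorem ksEntropy_ge_of_approx_trunc {X : Type*} [MeasurableSpace X] (T : X ≃ᵐ X)
    (μ : ℕ → Measure X) (hprob : ∀ n, IsProbabilityMeasure (μ n))
    (hinv : ∀ n, MeasurePreserving T (μ n) (μ n))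
    (ξ : ℕ → Set X) (hpart : IsCountablePartition ξ)
    (r : ℕ → ℕ) (ε : ℕ → ℝ) (hεpos : ∀ n, 0 < ε n)
    (hr : Tendsto r atTop atTop) (hε : Tendsto ε atTop (nhds 0))
    (hgen : ∀ n, IsGenerator T (μ n) ξ)
    (hclose : ∀ n, ∀ f : Fin (r n + 1) → ℕ,
      |((μ 0) (joinAtom T ξ 0 (r n + 1) f)).toReal
          - ((μ n) (joinAtom T ξ 0 (r n + 1) f)).toReal|
        ≤ ε n * ((μ n) (joinAtom T ξ 0 (r n + 1) f)).toReal)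
    (h : ℝ≥0∞)
    (hlim : h ≤ Filter.atTop.limsup (fun m =>
      Filter.atTop.limsup (fun n => entropyOf T (μ n) (truncPart ξ m)))) :
    h ≤ ksEntropy T (μ 0) :=
  ksEntropy_ge_of_approx_trunc_general T μ hprob hinv ξ hpart r ε hr hε hclose h hlim
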